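/- arXiv:1910.03341 — 2 statements merged into one kernel-verified Lean document; each statement's English description precedes it below -/
import Mathlib

section
/- Let T_{3,3} be the tree obtained from two disjoint copies of the complete binary tree B_3 (7 vertices each) by joining their roots with an edge. Then the parity vertex chromatic number of T_{3,3} equals 4. -/
open SimpleGraph

/-- A colouring `c` of the vertices of `G` with `k` colours is a *parity vertex colouring*
if every (nonempty) path in `G` contains an odd number of occurrences of some colour. -/
def IsParityColoring {V : Type} (G : SimpleGraph V) {k : ℕ} (c : V → Fin k) : Prop :=
  ∀ ⦃u v : V⦄ (p : G.Walk u v), p.IsPath → ∃ i : Fin k, Odd ((p.support.map c).count i)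

/-- The parity vertex chromatic number `χ_p(G)`: the least number of colours
in a parity vertex colouring of `G`. -/
noncomputable def parityChromaticNumber {V : Type} (G : SimpleGraph V) : ℕ :=
  sInf {k | ∃ c : V → Fin k, IsParityColoring G c}

/-- The tree `T_{3,3}`: two disjoint copies of the complete binary tree with 3 layers
(vertices `0..6` and `7..13`, heap indexing inside each copy) with their roots `0` and `7`
joined by an edge. -/
def T33 : SimpleGraph (Fin 14) :=
  SimpleGraph.fromRel (fun i j =>
    ((i : ℕ) < 7 ∧ (j : ℕ) < 7 ∧ ((j : ℕ) = 2 * (i : ℕ) + 1 ∨ (j : ℕ) = 2 * (i : ℕ) + 2)) ∨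
    (7 ≤ (i : ℕ) ∧ 7 ≤ (j : ℕ) ∧
      ((j : ℕ) = 2 * ((i : ℕ) - 7) + 1 + 7 ∨ (j : ℕ) = 2 * ((i : ℕ) - 7) + 2 + 7)) ∨
    ((i : ℕ) = 0 ∧ (j : ℕ) = 7))


/-!
Upper bound: an explicit 4-colouring, checked on every path by exhaustive depth-first search.

Lower bound: given a 3-colouring, attach to each vertex `u` of either copy of `B_3` the parity
vector in `(ZMod 2)^3` of the colours on the path from `u` up to the root of its copy. The path
from `u` in one copy to `v` in the other has the sum of the two vectors as parity vector, so the
two sets of root parities are disjoint, and neither contains `0`. Each set contains the three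
distinct parities along a root-to-leaf path. Moreover, either some leaf sees all three colours on
its root path (parity `1`), or every leaf has the colour of the root; then the path
leaf–child–root–child forces the two children to have different colours, which gives five
distinct root parities. Two such sets cannot fit disjointly into the seven nonzero vectors.
-/

def parityVector {k : ℕ} (l : List (Fin k)) : Fin k → ZMod 2 := fun i => (l.count i : ZMod 2)

theorem parityVector_append {k : ℕ} (l₁ l₂ : List (Fin k)) :
    parityVector (l₁ ++ l₂) = parityVector l₁ + parityVector l₂ := by
  ext i; simp [parityVector, List.count_append]

theorem parityVector_reverse {k : ℕ} (l : List (Fin k)) :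
    parityVector l.reverse = parityVector l := by
  ext i; simp [parityVector, List.count_reverse]

theorem parityVector_add_self {k : ℕ} (v : Fin k → ZMod 2) : v + v = 0 :=
  funext fun i => CharTwo.add_self_eq_zero (v i)

theorem exists_odd_count_iff_parityVector_ne_zero {k : ℕ} (l : List (Fin k)) :
    (∃ i, Odd (l.count i)) ↔ parityVector l ≠ 0 := by
  rw [Ne, ← not_iff_not, not_not, not_exists, funext_iff]
  simp only [parityVector, Pi.zero_apply, ZMod.natCast_eq_zero_iff_even, Nat.not_odd_iff_even]

theorem parityVector_eq_one_of_pairwise_ne {a b d : Fin 3} (hab : a ≠ b) (hbd : b ≠ d)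
    (had : a ≠ d) : parityVector [a, b, d] = 1 := by
  revert a b d; decide

section ParityColoring

variable {V : Type} {G : SimpleGraph V} {k : ℕ}

theorem isParityColoring_iff_forall_list (c : V → Fin k) :
    IsParityColoring G c ↔
      ∀ l : List V, l ≠ [] → l.Nodup → l.IsChain G.Adj → parityVector (l.map c) ≠ 0 := by
  simp only [← exists_odd_count_iff_parityVector_ne_zero]
  refine ⟨fun hc l hne hnd hch => ?_, fun hc u v p hp => ?_⟩
  · have hp : (Walk.ofSupport l hne hch).IsPath := by
      rwa [Walk.isPath_def, Walk.support_ofSupport]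
    simpa using hc _ hp
  · exact hc _ p.support_ne_nil hp.support_nodup p.isChain_adj_support

namespace IsParityColoring

variable {c : V → Fin k}

theorem parityVector_ne_zero (hc : IsParityColoring G c) {l : List V} (hne : l ≠ [])
    (hnd : l.Nodup) (hch : l.IsChain G.Adj) : parityVector (l.map c) ≠ 0 :=
  (isParityColoring_iff_forall_list c).mp hc l hne hnd hch

theorem ne_of_adj (hc : IsParityColoring G c) {u v : V} (h : G.Adj u v) : c u ≠ c v := by
  intro huv
  apply hc.parityVector_ne_zero (l := [u, v]) (by simp) (by simp [h.ne])
    (.cons_cons h (.singleton v))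
  simpa [huv] using (parityVector_append [c v] [c v]).trans (parityVector_add_self _)

theorem castLE (hc : IsParityColoring G c) {m : ℕ} (h : k ≤ m) :
    IsParityColoring G (Fin.castLE h ∘ c) := by
  intro u v p hp
  obtain ⟨i, hi⟩ := hc p hp
  refine ⟨Fin.castLE h i, ?_⟩
  rwa [← List.map_map, List.count_map_of_injective _ _ (Fin.castLE_injective h)]

theorem comp_embedding {W : Type} {H : SimpleGraph W} (f : G ↪g H) {c : W → Fin k}
    (hc : IsParityColoring H c) : IsParityColoring G (c ∘ f) := by
  intro u v p hp
  simpa [Walk.support_map, List.map_map] using hc (p.map f.toHom) (hp.map f.injective)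

end IsParityColoring

theorem parityChromaticNumber_eq_succ {m : ℕ} {c : V → Fin (m + 1)} (hc : IsParityColoring G c)
    (h : ∀ c' : V → Fin m, ¬ IsParityColoring G c') : parityChromaticNumber G = m + 1 := by
  refine le_antisymm (Nat.sInf_le ⟨c, hc⟩) (le_csInf ⟨_, c, hc⟩ ?_)
  rintro j ⟨c', hc'⟩
  by_contra! hj
  exact h _ (hc'.castLE (Nat.lt_succ_iff.mp hj))

end ParityColoring

section PathSearch

variable {V : Type} [DecidableEq V] (G : SimpleGraph V) [DecidableRel G.Adj] (vs : List V)
  (P : List V → Bool)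

/-- Checks `P` on `v :: l` and on every list obtained from it by repeatedly prepending, at most
`n` times, a vertex of `vs` that is adjacent to the current head and not yet in the list. -/
def allPathsExtend : ℕ → V → List V → Bool
  | 0, v, l => P (v :: l)
  | n + 1, v, l => P (v :: l) &&
      vs.all fun a => !decide (G.Adj a v ∧ a ∉ v :: l) || allPathsExtend n a (v :: l)

variable {G vs P}

theorem allPathsExtend_sound (n : ℕ) (v : V) (l p : List V)
    (h : allPathsExtend G vs P n v l = true) (hp : p.length ≤ n) (hvs : ∀ a ∈ p, a ∈ vs)
    (hnd : (p ++ v :: l).Nodup) (hch : (p ++ v :: l).IsChain G.Adj) :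
    P (p ++ v :: l) = true := by
  induction n generalizing v l p with
  | zero =>
    rw [List.length_eq_zero_iff.mp (Nat.le_zero.mp hp)]
    exact h
  | succ n ih =>
    simp only [allPathsExtend, Bool.and_eq_true, List.all_eq_true, Bool.or_eq_true,
      Bool.not_eq_true', decide_eq_false_iff_not] at h
    obtain rfl | ⟨p, a, rfl⟩ := p.eq_nil_or_concat'
    · exact h.1
    simp only [List.append_assoc, List.singleton_append] at hnd hch ⊢
    refine ih a (v :: l) p ?_ (by simpa using hp) (fun b hb => hvs b (by simp [hb])) hnd hch
    refine (h.2 a (hvs a (by simp))).resolve_left (not_not.mpr ⟨?_, ?_⟩)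
    · exact (List.isChain_append.mp hch).2.1.rel
    · exact (List.nodup_cons.mp (List.nodup_append.mp hnd).2.1).1

theorem isParityColoring_of_allPathsExtend {k : ℕ} {c : V → Fin k} (vs : List V)
    (hvs : ∀ v, v ∈ vs)
    (h : ∀ v ∈ vs,
      allPathsExtend G vs (fun l => decide (parityVector (l.map c) ≠ 0)) vs.length v [] = true) :
    IsParityColoring G c := by
  rw [isParityColoring_iff_forall_list]
  intro l hne hnd hch
  obtain ⟨p, v, rfl⟩ := (List.eq_nil_or_concat' l).resolve_left hne
  have hlen : (p ++ [v]).length ≤ vs.length := (hnd.subperm fun a _ => hvs a).length_le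
  simpa using allPathsExtend_sound vs.length v [] p (h v (hvs v)) (by simp at hlen; omega)
    (fun a _ => hvs a) hnd hch

end PathSearch

theorem not_disjoint_of_card_bounds {α : Type} [Fintype α] [DecidableEq α]
    (hα : Fintype.card α = 8) {A B : Finset α} {z x : α} (hA0 : z ∉ A) (hB0 : z ∉ B)
    (hA3 : 3 ≤ A.card) (hB3 : 3 ≤ B.card) (hA : x ∈ A ∨ 5 ≤ A.card) (hB : x ∈ B ∨ 5 ≤ B.card) :
    ¬ Disjoint A B := by
  intro hAB
  have hcard : A.card + B.card ≤ 7 := by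
    have hsub : A ∪ B ⊆ Finset.univ.erase z := fun y hy =>
      Finset.mem_erase.mpr
        ⟨by rintro rfl; rcases Finset.mem_union.mp hy with h | h <;> contradiction,
          Finset.mem_univ y⟩
    simpa [Finset.card_union_of_disjoint hAB, hα] using Finset.card_le_card hsub
  rcases hA with hxA | hA5 <;> rcases hB with hxB | hB5
  · exact Finset.disjoint_left.mp hAB hxA hxB
  all_goals omega

def B3 : SimpleGraph (Fin 7) :=
  SimpleGraph.fromRel fun i j => (j : ℕ) = 2 * i + 1 ∨ (j : ℕ) = 2 * i + 2

instance : DecidableRel B3.Adj := fun a b => inferInstanceAs (Decidable (a ≠ b ∧ _))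

namespace B3

def rootPath : Fin 7 → List (Fin 7) :=
  ![[0], [1, 0], [2, 0], [3, 1, 0], [4, 1, 0], [5, 2, 0], [6, 2, 0]]

theorem rootPath_isPath (u : Fin 7) :
    rootPath u ≠ [] ∧ (rootPath u).Nodup ∧ (rootPath u).IsChain B3.Adj := by
  revert u; decide

theorem exists_rootPath_of_leaf (u : Fin 7) (hu : 3 ≤ u) :
    ∃ p, B3.Adj u p ∧ B3.Adj p 0 ∧ rootPath u = [u, p, 0] := by
  revert u; decide

def rootParities (g : Fin 7 → Fin 3) : Finset (Fin 3 → ZMod 2) :=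
  Finset.univ.image fun u => parityVector ((rootPath u).map g)

theorem card_parities_of_chain {a b d : Fin 3} (hab : a ≠ b) (hbd : b ≠ d) :
    ({parityVector [a], parityVector [b, a], parityVector [d, b, a]} : Finset _).card = 3 := by
  revert a b d; decide

theorem card_parities_of_leaves_eq_root {a b b' : Fin 3} (hab : a ≠ b) (hab' : a ≠ b')
    (hbb' : b ≠ b') :
    ({parityVector [a], parityVector [b, a], parityVector [b', a], parityVector [a, b, a],
      parityVector [a, b', a]} : Finset _).card = 5 := by
  revert a b b'; decide

theorem rootParities_spec {g : Fin 7 → Fin 3} (hg : IsParityColoring B3 g) :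
    0 ∉ rootParities g ∧ 3 ≤ (rootParities g).card ∧
      (1 ∈ rootParities g ∨ 5 ≤ (rootParities g).card) := by
  have mem (u : Fin 7) : parityVector ((rootPath u).map g) ∈ rootParities g :=
    Finset.mem_image_of_mem _ (Finset.mem_univ u)
  have hne {u v : Fin 7} (h : B3.Adj u v := by decide) : g u ≠ g v := hg.ne_of_adj h
  refine ⟨?_, ?_, ?_⟩
  · simp only [rootParities, Finset.mem_image, not_exists, not_and]
    intro u _
    obtain ⟨hnil, hnd, hch⟩ := rootPath_isPath u
    exact hg.parityVector_ne_zero hnil hnd hch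
  · calc 3 = _ := (card_parities_of_chain (hne (u := 0) (v := 1)) (hne (u := 1) (v := 3))).symm
      _ ≤ _ := Finset.card_le_card <| by
        simp only [Finset.insert_subset_iff, Finset.singleton_subset_iff]
        exact ⟨mem 0, mem 1, mem 3⟩
  by_cases hleaf : ∀ u : Fin 7, 3 ≤ u → g u = g 0
  · right
    have h12 : g 1 ≠ g 2 := by
      intro h
      apply hg.parityVector_ne_zero (l := [3, 1, 0, 2]) (by decide) (by decide) (by decide)
      simpa [hleaf 3 (by decide), h] using
        (parityVector_append [g 0, g 2] [g 0, g 2]).trans (parityVector_add_self _)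
    calc 5 = _ := (card_parities_of_leaves_eq_root (hne (u := 0) (v := 1))
          (hne (u := 0) (v := 2)) h12).symm
      _ ≤ _ := Finset.card_le_card <| by
        simp only [Finset.insert_subset_iff, Finset.singleton_subset_iff]
        refine ⟨mem 0, mem 1, mem 2, ?_, ?_⟩
        · simpa [rootPath, hleaf 3 (by decide)] using mem 3
        · simpa [rootPath, hleaf 5 (by decide)] using mem 5
  · left
    push Not at hleaf
    obtain ⟨u, hu, hu0⟩ := hleaf
    obtain ⟨p, hup, hp0, hpath⟩ := exists_rootPath_of_leaf u hu
    rw [← parityVector_eq_one_of_pairwise_ne (hg.ne_of_adj hup) (hg.ne_of_adj hp0) hu0]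
    simpa [hpath] using mem u

end B3

instance : DecidableRel T33.Adj := fun a b => inferInstanceAs (Decidable (a ≠ b ∧ _))

namespace T33

def c4 : Fin 14 → Fin 4 := ![0, 1, 1, 2, 2, 2, 2, 1, 2, 2, 3, 3, 3, 3]

theorem isParityColoring_c4 : IsParityColoring T33 c4 :=
  isParityColoring_of_allPathsExtend (List.finRange 14) List.mem_finRange (by decide)

def leftCopy : B3 ↪g T33 where
  toEmbedding := Fin.castLEEmb (by norm_num)
  map_rel_iff' := by decide

def rightCopy : B3 ↪g T33 where
  toEmbedding := Fin.natAddEmb 7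
  map_rel_iff' := by decide

theorem crossPath_isPath (u v : Fin 7) :
    let l := (B3.rootPath u).map leftCopy ++ ((B3.rootPath v).map rightCopy).reverse
    l ≠ [] ∧ l.Nodup ∧ l.IsChain T33.Adj := by
  revert u v; decide

theorem not_isParityColoring_fin_three (c : Fin 14 → Fin 3) : ¬ IsParityColoring T33 c := by
  intro hc
  obtain ⟨hl0, hl3, hl⟩ := B3.rootParities_spec (hc.comp_embedding leftCopy)
  obtain ⟨hr0, hr3, hr⟩ := B3.rootParities_spec (hc.comp_embedding rightCopy)
  refine not_disjoint_of_card_bounds (by simp) hl0 hr0 hl3 hr3 hl hr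
    (Finset.disjoint_left.mpr fun x hxl hxr => ?_)
  obtain ⟨u, -, rfl⟩ := Finset.mem_image.mp hxl
  obtain ⟨v, -, huv⟩ := Finset.mem_image.mp hxr
  obtain ⟨hne, hnd, hch⟩ := crossPath_isPath u v
  apply hc.parityVector_ne_zero hne hnd hch
  simp only [List.map_append, List.map_reverse, List.map_map, parityVector_append,
    parityVector_reverse]
  rw [← huv]
  exact parityVector_add_self _

end T33

/-- The parity vertex chromatic number of `T_{3,3}` equals 4. -/
theorem parityChromatic_T33 : parityChromaticNumber T33 = 4 :=
  parityChromaticNumber_eq_succ T33.isParityColoring_c4 T33.not_isParityColoring_fin_three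
end

section
/- Define A(l,d) for integers by A(l,0) = 0, A(l,d) = 2^l − 1 for d ≥ l ≥ 0, and A(l,d) = A(l−1,d−1)+A(l−1,d)+1 for l > d > 0. Then for all l ≥ d ≥ 0 with l > 0, it holds that A(l,d) ≤ l^d. -/
/-- The recursively defined function `A`: `A(l,0) = 0`, `A(l,d) = 2^l − 1` for `d ≥ l`,
and `A(l,d) = A(l−1,d−1) + A(l−1,d) + 1` for `l > d > 0`. -/
def Arec : ℕ → ℕ → ℕ
  | 0, _ => 0
  | _, 0 => 0
  | l + 1, d + 1 =>
    if l + 1 ≤ d + 1 then 2 ^ (l + 1) - 1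
    else Arec l d + Arec l (d + 1) + 1

/-! Induction on `l`. When `d ≥ l` the value is `2 ^ l - 1 ≤ l ^ l ≤ l ^ d`; in the recursive
case the gap `(l + 1) ^ (d + 1) - l ^ (d + 1) > l ^ d` absorbs `A(l, d)` together with the `+ 1`. -/

@[simp]
lemma Arec_zero_left (d : ℕ) : Arec 0 d = 0 := by
  simp [Arec]

@[simp]
lemma Arec_zero_right (l : ℕ) : Arec l 0 = 0 := by
  cases l <;> simp [Arec]

lemma Arec_succ_succ_of_le {l d : ℕ} (h : l ≤ d) : Arec (l + 1) (d + 1) = 2 ^ (l + 1) - 1 := by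
  simp [Arec, h]

lemma Arec_succ_succ_of_lt {l d : ℕ} (h : d < l) :
    Arec (l + 1) (d + 1) = Arec l d + Arec l (d + 1) + 1 := by
  simp [Arec, Nat.not_le.mpr h]

lemma two_pow_sub_one_le_self_pow (n : ℕ) : 2 ^ n - 1 ≤ n ^ n := by
  rcases Nat.lt_or_ge n 2 with hn | hn
  · interval_cases n <;> simp
  · exact (Nat.pow_le_pow_left hn n).trans' (Nat.sub_le _ _)

lemma pow_add_pow_succ_lt_succ_pow {d : ℕ} (hd : d ≠ 0) (l : ℕ) :
    l ^ d + l ^ (d + 1) < (l + 1) ^ (d + 1) := by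
  have h : l ^ d < (l + 1) ^ d := Nat.pow_lt_pow_left l.lt_succ_self hd
  calc l ^ d + l ^ (d + 1) = l ^ d + l ^ d * l := by rw [pow_succ]
    _ < (l + 1) ^ d + (l + 1) ^ d * l := add_lt_add_of_lt_of_le h (Nat.mul_le_mul_right l h.le)
    _ = (l + 1) ^ (d + 1) := by ring

theorem Arec_le_pow_general (l d : ℕ) : Arec l d ≤ l ^ d := by
  induction l generalizing d with
  | zero => simp
  | succ l ih =>
    rcases d with _ | d
    · simp
    rcases le_or_gt l d with hld | hdl
    · rw [Arec_succ_succ_of_le hld]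
      exact (two_pow_sub_one_le_self_pow _).trans (Nat.pow_le_pow_right l.succ_pos (by omega))
    · rw [Arec_succ_succ_of_lt hdl]
      rcases d with _ | d
      · simpa using ih 1
      · calc Arec l (d + 1) + Arec l (d + 2) + 1 ≤ l ^ (d + 1) + l ^ (d + 2) + 1 := by
              gcongr <;> apply ih
          _ ≤ (l + 1) ^ (d + 2) := pow_add_pow_succ_lt_succ_pow d.succ_ne_zero l

/-- For `l ≥ d ≥ 0` with `l > 0`, it holds that `A(l,d) ≤ l^d`. -/
theorem Arec_le_pow (l d : ℕ) (hdl : d ≤ l) (hl : 0 < l) : Arec l d ≤ l ^ d :=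
  Arec_le_pow_general l d
end
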